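/- With the notation of the adjoint construction, if the adjoint image [ω_{ξ,W,B}] vanishes, then one can choose liftings s̃_i ∈ H⁰(X, E) of η_i such that Λ^{n+1}(s̃_1 ∧ … ∧ s̃_{n+1}) = 0 in H⁰(X, det E); explicitly, if ω = Σ a_i λⁿ(η_1 ∧ … ∧ η̂_i ∧ … ∧ η_{n+1}), setting s̃_i = s_i + (−1)^{n−i} a_i · dε works. -/

import Mathlib

/-!
Expand `Λ` multilinearly in the perturbations `cᵢ • dε`: every term containing `dε` in two or more slots
vanishes because `Λ` is alternating, so only the terms with `dε` in at most one slot survive.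
Putting `dε` in slot `i` gives `(-1)^(i+n) λ(η₁, …, η̂ᵢ, …, η_{n+1})`, so the chosen coefficients
make the correction terms add up to exactly `-ω = -Λ(s)`.
-/

open Function

theorem Finset.sum_finset_eq_empty_add_sum_singleton {ι M : Type*} [Fintype ι] [DecidableEq ι]
    [AddCommMonoid M] (g : Finset ι → M) (hg : ∀ t : Finset ι, 2 ≤ t.card → g t = 0) :
    ∑ t, g t = g ∅ + ∑ i, g {i} := by
  have hsmall : ∀ t : Finset ι, t.card ≤ 1 ↔ t = ∅ ∨ ∃ i, t = {i} := by
    intro t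
    rw [Nat.le_one_iff_eq_zero_or_eq_one, Finset.card_eq_zero, Finset.card_eq_one]
  rw [← Finset.sum_subset (Finset.subset_univ (insert ∅ (Finset.univ.image singleton)))]
  · rw [Finset.sum_insert (by simp), Finset.sum_image (fun _ _ _ _ => Finset.singleton_inj.mp)]
  · intro t _ ht
    refine hg t (show 1 < t.card from not_le.mp fun h => ht ?_)
    simpa [eq_comm] using (hsmall t).mp h

namespace AlternatingMap

variable {R M N ι : Type*} [CommSemiring R] [AddCommMonoid M] [Module R M]
  [AddCommMonoid N] [Module R N]

theorem map_eq_zero_of_eq_smul_of_eq_smul [DecidableEq ι] (f : M [⋀^ι]→ₗ[R] N) {v : ι → M}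
    {e : M} {i j : ι} {a b : R} (hi : v i = a • e) (hj : v j = b • e) (hij : i ≠ j) :
    f v = 0 := by
  have hj' : update v i e j = b • e := by rw [update_of_ne hij.symm, hj]
  calc f v = a • b • f (update (update v i e) j e) := by
        rw [← map_update_smul, ← hj', update_eq_self, ← map_update_smul, ← hi, update_eq_self]
    _ = 0 := by
        rw [f.map_eq_zero_of_eq _ (by rw [update_self, update_of_ne hij, update_self]) hij,
          smul_zero, smul_zero]

theorem map_add_smul_const [Fintype ι] [DecidableEq ι] (f : M [⋀^ι]→ₗ[R] N) (s : ι → M)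
    (c : ι → R) (e : M) :
    f (fun i => s i + c i • e) = f s + ∑ i, c i • f (update s i e) := by
  have hsplit : (fun i => s i + c i • e) = (fun i => c i • e) + s := funext fun i => add_comm _ _
  rw [hsplit, map_add_univ, Finset.sum_finset_eq_empty_add_sum_singleton]
  · simp [Finset.piecewise_singleton, map_update_smul]
  · intro t ht
    obtain ⟨i, hi, j, hj, hij⟩ := Finset.one_lt_card.mp ht
    exact f.map_eq_zero_of_eq_smul_of_eq_smul (t.piecewise_eq_of_mem _ _ hi)
      (t.piecewise_eq_of_mem _ _ hj) hij

end AlternatingMap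

theorem neg_one_pow_succ_mul_mul_neg_one_pow {R : Type*} [CommRing R] (k : ℕ) (a : R) :
    (-1 : R) ^ (k + 1) * a * (-1) ^ k = -a := by
  rw [pow_succ]
  ring_nf
  simp [pow_mul']

theorem adjoint_vanishing_liftings_general
    {K HE HF V : Type*} [Field K]
    [AddCommGroup HE] [Module K HE] [AddCommGroup HF] [Module K HF]
    [AddCommGroup V] [Module K V] (n : ℕ)
    (ρ : HE →ₗ[K] HF) (dε : HE)
    (lam : AlternatingMap K HF V (Fin n))
    (Lam : AlternatingMap K HE V (Fin (n + 1)))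
    (hcompat : ∀ (x : Fin (n + 1) → HE) (i : Fin (n + 1)), x i = dε →
      Lam x = ((-1 : K) ^ ((i : ℕ) + n)) • lam (fun j => ρ (x (i.succAbove j))))
    (η : Fin (n + 1) → HF)
    (s : Fin (n + 1) → HE) (hs : ∀ i, ρ (s i) = η i)
    (a : Fin (n + 1) → K)
    (hω : Lam s = ∑ i, a i • lam (fun j => η (i.succAbove j))) :
    Lam (fun i => s i + ((-1 : K) ^ ((i : ℕ) + n + 1) * a i) • dε) = 0 := by
  classical
  have hcorrection : ∀ i : Fin (n + 1), ((-1 : K) ^ ((i : ℕ) + n + 1) * a i) • Lam (update s i dε) =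
      -(a i • lam (fun j => η (i.succAbove j))) := by
    intro i
    have hρ : (fun j => ρ (update s i dε (i.succAbove j))) = fun j => η (i.succAbove j) :=
      funext fun j => by rw [update_of_ne (Fin.succAbove_ne i j), hs]
    rw [hcompat _ i (update_self i dε s), hρ, smul_smul,
      neg_one_pow_succ_mul_mul_neg_one_pow, neg_smul]
  rw [Lam.map_add_smul_const, Finset.sum_congr rfl fun i _ => hcorrection i,
    Finset.sum_neg_distrib, hω, add_neg_cancel]

/-- If the adjoint image vanishes, i.e. the adjoint form satisfies
`ω = Λ(s) = Σ_i a_i λⁿ(η_1 ∧ … ∧ η̂_i ∧ … ∧ η_{n+1})`, then the modified liftings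
`s̃_i = s_i + (−1)^{n−i} a_i · dε` satisfy `Λ^{n+1}(s̃_1 ∧ … ∧ s̃_{n+1}) = 0`
(0-based indices, so the sign is `(-1)^(i+n+1)`). -/
theorem adjoint_vanishing_liftings
    {K HE HF V : Type*} [Field K]
    [AddCommGroup HE] [Module K HE] [AddCommGroup HF] [Module K HF]
    [AddCommGroup V] [Module K V] (n : ℕ)
    (ρ : HE →ₗ[K] HF) (dε : HE)
    (hker : LinearMap.ker ρ = Submodule.span K {dε})
    (lam : AlternatingMap K HF V (Fin n))
    (Lam : AlternatingMap K HE V (Fin (n + 1)))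
    (hcompat : ∀ (x : Fin (n + 1) → HE) (i : Fin (n + 1)), x i = dε →
      Lam x = ((-1 : K) ^ ((i : ℕ) + n)) • lam (fun j => ρ (x (i.succAbove j))))
    (η : Fin (n + 1) → HF) (hη : LinearIndependent K η)
    (s : Fin (n + 1) → HE) (hs : ∀ i, ρ (s i) = η i)
    (a : Fin (n + 1) → K)
    (hω : Lam s = ∑ i, a i • lam (fun j => η (i.succAbove j))) :
    Lam (fun i => s i + ((-1 : K) ^ ((i : ℕ) + n + 1) * a i) • dε) = 0 :=
  adjoint_vanishing_liftings_general n ρ dε lam Lam hcompat η s hs a hω
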